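/- For nonzero PSD matrices K_X, K_Y ∈ ℝ^{M×M}: 1 − NBS(K_X,K_Y) ≤ 1 − CKA(K_X^{1/2}, K_Y^{1/2}) ≤ √(1 − NBS(K_X,K_Y)²). -/

import Mathlib

open Matrix

/-- The positive semidefinite square root of a positive semidefinite matrix
(as `Matrix.PosSemidef.sqrt` was defined in the older Mathlib). -/
noncomputable def Matrix.PosSemidef.sqrt {n : Type*} [Fintype n] [DecidableEq n]
    {A : Matrix n n ℝ} (hA : A.PosSemidef) : Matrix n n ℝ :=
  hA.1.eigenvectorUnitary.1 * diagonal (Real.sqrt ∘ hA.1.eigenvalues) *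
    (star hA.1.eigenvectorUnitary : Matrix n n ℝ)

lemma Matrix.PosSemidef.posSemidef_sqrt {n : Type*} [Fintype n] [DecidableEq n]
    {A : Matrix n n ℝ} (hA : A.PosSemidef) : hA.sqrt.PosSemidef := by
  apply PosSemidef.mul_mul_conjTranspose_same
  refine posSemidef_diagonal_iff.mpr fun i => ?_
  exact Real.sqrt_nonneg _

lemma real_conjTranspose_eq {m n : ℕ} (A : Matrix (Fin m) (Fin n) ℝ) : Aᴴ = Aᵀ := rfl

lemma psd_tmul {m n : ℕ} (A : Matrix (Fin m) (Fin n) ℝ) : (Aᵀ * A).PosSemidef := by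
  have h := Matrix.posSemidef_conjTranspose_mul_self A
  rwa [real_conjTranspose_eq] at h

lemma psd_gram {m n : ℕ} (A : Matrix (Fin m) (Fin n) ℝ) : (A * Aᵀ).PosSemidef := by
  have h := Matrix.posSemidef_self_mul_conjTranspose A
  rwa [real_conjTranspose_eq] at h

lemma psd_sand {M : ℕ} {Kx Ky : Matrix (Fin M) (Fin M) ℝ} (hx : Kx.PosSemidef) (hy : Ky.PosSemidef) :
    (hx.sqrt * Ky * hx.sqrt).PosSemidef := by
  have h := hy.mul_mul_conjTranspose_same hx.sqrt
  rwa [hx.posSemidef_sqrt.isHermitian.eq] at h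

/-- Nuclear norm: sum of singular values, i.e. `Tr[(AᵀA)^{1/2}]`. -/
noncomputable def nuclearNorm {m n : ℕ} (A : Matrix (Fin m) (Fin n) ℝ) : ℝ :=
  (Matrix.PosSemidef.sqrt (psd_tmul A)).trace

/-- Frobenius norm. -/
noncomputable def frobNorm {m n : ℕ} (A : Matrix (Fin m) (Fin n) ℝ) : ℝ :=
  Real.sqrt (Matrix.trace (Aᵀ * A))

/-- Fidelity `Tr[(Kx^{1/2} Ky Kx^{1/2})^{1/2}]` between PSD matrices. -/
noncomputable def fidelity {M : ℕ} {Kx Ky : Matrix (Fin M) (Fin M) ℝ}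
    (hx : Kx.PosSemidef) (hy : Ky.PosSemidef) : ℝ :=
  (Matrix.PosSemidef.sqrt (psd_sand hx hy)).trace

/-!
Write `A = K_X^{1/2}`, `B = K_Y^{1/2}` and `s = ‖A‖ ‖B‖` (Frobenius norms), so that
`s = √(Tr K_X Tr K_Y)`, the CKA numerator is `c = Tr (A B)` and, as `A K_Y A = (B A)ᵀ (B A)`,
the NBS numerator is the nuclear norm `F = Tr |B A|`. The polar decomposition `B A = U |B A|`
gives `c = Tr (U |B A|) ≤ Tr |B A| = F`, the lower bound, and `F = Tr (Uᵀ B A)`.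
Cauchy–Schwarz for the Frobenius inner product, applied to `X = B^{1/2} U A^{1/2}` and
`Y = B^{1/2} A^{1/2}`, gives `F² ≤ ‖X‖² ‖Y‖² = Tr (A Uᵀ B U) c ≤ s c`, whence
`1 - c / s ≤ 1 - (F / s)² ≤ √(1 - (F / s)²)`.
-/

theorem Matrix.PosSemidef.transpose_eq {n : Type*} {A : Matrix n n ℝ} (hA : A.PosSemidef) :
    Aᵀ = A :=
  hA.1

theorem Matrix.PosSemidef.trace_pos_of_ne_zero {n : Type*} [Fintype n] {A : Matrix n n ℝ}
    (hA : A.PosSemidef) (h : A ≠ 0) : 0 < trace A :=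
  hA.trace_nonneg.lt_of_ne (Ne.symm (mt hA.trace_eq_zero_iff.mp h))

section Frobenius

variable {m n : Type*} [Fintype m] [Fintype n]

theorem Matrix.trace_transpose_mul_eq_sum (X Y : Matrix m n ℝ) :
    trace (Xᵀ * Y) = ∑ p : m × n, X p.1 p.2 * Y p.1 p.2 := by
  rw [Fintype.sum_prod_type, Finset.sum_comm]
  rfl

theorem Matrix.trace_transpose_mul_self_nonneg (X : Matrix m n ℝ) : 0 ≤ trace (Xᵀ * X) := by
  rw [trace_transpose_mul_eq_sum]
  exact Finset.sum_nonneg fun p _ => mul_self_nonneg _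

theorem Matrix.trace_transpose_mul_sq_le (X Y : Matrix m n ℝ) :
    trace (Xᵀ * Y) ^ 2 ≤ trace (Xᵀ * X) * trace (Yᵀ * Y) := by
  simp only [trace_transpose_mul_eq_sum, ← sq]
  exact Finset.sum_mul_sq_le_sq_mul_sq _ _ _

theorem Matrix.trace_transpose_mul_le_sqrt (X Y : Matrix m n ℝ) :
    trace (Xᵀ * Y) ≤ √(trace (Xᵀ * X) * trace (Yᵀ * Y)) :=
  Real.le_sqrt_of_sq_le (trace_transpose_mul_sq_le X Y)

end Frobenius

section PosSemidef

variable {n : Type*} [Fintype n] [DecidableEq n]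

theorem Matrix.PosSemidef.sqrt_mul_self {A : Matrix n n ℝ} (hA : A.PosSemidef) :
    hA.sqrt * hA.sqrt = A := by
  set U : Matrix n n ℝ := hA.1.eigenvectorUnitary.1
  set D := diagonal (Real.sqrt ∘ hA.1.eigenvalues)
  have hD : D * D = diagonal hA.1.eigenvalues := by
    rw [diagonal_mul_diagonal]
    exact congrArg diagonal (funext fun i => Real.mul_self_sqrt (hA.eigenvalues_nonneg i))
  have hU : star U * U = 1 := Unitary.coe_star_mul_self _
  calc hA.sqrt * hA.sqrt = U * (D * (star U * U) * D) * star U := by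
        simp only [sqrt, U, D, Matrix.mul_assoc]
    _ = A := by
        rw [hU, Matrix.mul_one, hD]
        conv_rhs => rw [hA.1.spectral_theorem, Unitary.conjStarAlgAut_apply]
        rfl

theorem Matrix.PosSemidef.trace_orthogonal_mul_le {U P : Matrix n n ℝ} (hP : P.PosSemidef)
    (hU : Uᵀ * U = 1) : trace (U * P) ≤ trace P := by
  set C := hP.sqrt
  have hC : Cᵀ = C := hP.posSemidef_sqrt.transpose_eq
  have hCC : C * C = P := hP.sqrt_mul_self
  calc trace (U * P) = trace (Cᵀ * (U * C)) := by
        rw [hC, ← hCC, ← Matrix.mul_assoc, trace_mul_comm]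
    _ ≤ √(trace (Cᵀ * C) * trace ((U * C)ᵀ * (U * C))) := trace_transpose_mul_le_sqrt _ _
    _ = √(trace P * trace P) := by
        rw [transpose_mul, Matrix.mul_assoc, ← Matrix.mul_assoc Uᵀ, hU, Matrix.one_mul, hC, hCC]
    _ = trace P := Real.sqrt_mul_self hP.trace_nonneg

theorem Matrix.PosSemidef.sq_trace_orthogonal_mul_mul_le {A B U : Matrix n n ℝ}
    (hA : A.PosSemidef) (hB : B.PosSemidef) (hU : Uᵀ * U = 1) :
    trace (Uᵀ * B * A) ^ 2 ≤ trace (A * B) * √(trace (A * A) * trace (B * B)) := by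
  have hU' : U * Uᵀ = 1 := mul_eq_one_comm.mp hU
  set S := hA.sqrt
  set R := hB.sqrt
  have hS : Sᵀ = S := hA.posSemidef_sqrt.transpose_eq
  have hR : Rᵀ = R := hB.posSemidef_sqrt.transpose_eq
  have hSS : S * S = A := hA.sqrt_mul_self
  have hRR : R * R = B := hB.sqrt_mul_self
  have hXY : trace ((R * U * S)ᵀ * (R * S)) = trace (Uᵀ * B * A) := by
    rw [← hRR, ← hSS]
    simp only [transpose_mul, hS, hR, Matrix.mul_assoc]
    rw [trace_mul_comm S]
    simp only [Matrix.mul_assoc]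
  have hYY : trace ((R * S)ᵀ * (R * S)) = trace (A * B) := by
    rw [trace_mul_comm A, ← hRR, ← hSS]
    simp only [transpose_mul, hS, hR, Matrix.mul_assoc]
    rw [trace_mul_comm S]
    simp only [Matrix.mul_assoc]
  have hXX : trace ((R * U * S)ᵀ * (R * U * S)) ≤ √(trace (A * A) * trace (B * B)) := by
    have hconj : trace ((Uᵀ * B * U)ᵀ * (Uᵀ * B * U)) = trace (B * B) := by
      simp only [transpose_mul, transpose_transpose, hB.transpose_eq, Matrix.mul_assoc]
      rw [← Matrix.mul_assoc U Uᵀ, hU', Matrix.one_mul, trace_mul_comm]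
      simp only [Matrix.mul_assoc, hU', Matrix.mul_one]
    calc trace ((R * U * S)ᵀ * (R * U * S)) = trace (Aᵀ * (Uᵀ * B * U)) := by
          rw [hA.transpose_eq, trace_mul_comm A, ← hRR, ← hSS]
          simp only [transpose_mul, hS, hR, Matrix.mul_assoc]
          rw [trace_mul_comm S]
          simp only [Matrix.mul_assoc]
      _ ≤ √(trace (Aᵀ * A) * trace ((Uᵀ * B * U)ᵀ * (Uᵀ * B * U))) :=
          trace_transpose_mul_le_sqrt _ _
      _ = √(trace (A * A) * trace (B * B)) := by rw [hconj, hA.transpose_eq]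
  calc trace (Uᵀ * B * A) ^ 2 = trace ((R * U * S)ᵀ * (R * S)) ^ 2 := by rw [hXY]
    _ ≤ trace ((R * U * S)ᵀ * (R * U * S)) * trace ((R * S)ᵀ * (R * S)) :=
        trace_transpose_mul_sq_le _ _
    _ ≤ √(trace (A * A) * trace (B * B)) * trace (A * B) := by
        rw [hYY]
        exact mul_le_mul_of_nonneg_right hXX (hYY ▸ trace_transpose_mul_self_nonneg _)
    _ = trace (A * B) * √(trace (A * A) * trace (B * B)) := mul_comm _ _

end PosSemidef

theorem LinearIsometry.exists_apply_eq_of_norm_eq {𝕜 E V : Type*} [RCLike 𝕜] [AddCommGroup E]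
    [Module 𝕜 E] [NormedAddCommGroup V] [InnerProductSpace 𝕜 V] [FiniteDimensional 𝕜 V]
    {p f : E →ₗ[𝕜] V} (h : ∀ x, ‖p x‖ = ‖f x‖) : ∃ u : V →ₗᵢ[𝕜] V, ∀ x, u (p x) = f x := by
  have hker : LinearMap.ker p ≤ LinearMap.ker f := fun x hx => by
    rw [LinearMap.mem_ker, ← norm_eq_zero, ← h x, norm_eq_zero]
    exact hx
  let g : LinearMap.range p →ₗ[𝕜] V :=
    (LinearMap.ker p).liftQ f hker ∘ₗ p.quotKerEquivRange.symm.toLinearMap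
  have hg : ∀ x, g ⟨p x, LinearMap.mem_range_self p x⟩ = f x := fun x => by
    simp [g, LinearMap.quotKerEquivRange_symm_apply_image]
  let L : LinearMap.range p →ₗᵢ[𝕜] V :=
    ⟨g, by rintro ⟨_, x, rfl⟩; rw [hg]; exact (h x).symm⟩
  exact ⟨L.extend, fun x => (L.extend_apply ⟨p x, _⟩).trans (hg x)⟩

theorem Matrix.exists_orthogonal_mul_eq_of_transpose_mul_self_eq {n : Type*} [Fintype n]
    [DecidableEq n] {M P : Matrix n n ℝ} (h : Pᵀ * P = Mᵀ * M) :
    ∃ U : Matrix n n ℝ, Uᵀ * U = 1 ∧ U * P = M := by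
  let T := toEuclideanCLM (n := n) (𝕜 := ℝ)
  have hT : ∀ A : Matrix n n ℝ, T Aᵀ = (T A).adjoint := fun A => by
    rw [← conjTranspose_eq_transpose_of_trivial, ← star_eq_conjTranspose, map_star,
      ContinuousLinearMap.star_eq_adjoint]
  have hnorm_sq : ∀ A x, ‖T A x‖ ^ 2 = inner ℝ x (T (Aᵀ * A) x) := fun A x => by
    rw [(T A).apply_norm_sq_eq_inner_adjoint_right, map_mul, hT]
    rfl
  have hnorm : ∀ x, ‖T P x‖ = ‖T M x‖ := fun x =>
    (sq_eq_sq₀ (norm_nonneg _) (norm_nonneg _)).mp (by rw [hnorm_sq, hnorm_sq, h])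
  obtain ⟨u, hu⟩ := LinearIsometry.exists_apply_eq_of_norm_eq
    (p := (T P : EuclideanSpace ℝ n →ₗ[ℝ] EuclideanSpace ℝ n)) (f := T M) hnorm
  refine ⟨T.symm u.toContinuousLinearMap, EquivLike.injective T ?_, EquivLike.injective T ?_⟩
  · rw [map_mul, hT, map_one, StarAlgEquiv.apply_symm_apply]
    exact u.adjoint_comp_self
  · rw [map_mul, StarAlgEquiv.apply_symm_apply]
    exact ContinuousLinearMap.ext hu

section NuclearNorm

variable {N : ℕ}

theorem exists_polar_decomposition (M : Matrix (Fin N) (Fin N) ℝ) :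
    ∃ U : Matrix (Fin N) (Fin N) ℝ, Uᵀ * U = 1 ∧ U * (psd_tmul M).sqrt = M :=
  exists_orthogonal_mul_eq_of_transpose_mul_self_eq <| by
    rw [(psd_tmul M).posSemidef_sqrt.transpose_eq, (psd_tmul M).sqrt_mul_self]

theorem trace_le_nuclearNorm (M : Matrix (Fin N) (Fin N) ℝ) : trace M ≤ nuclearNorm M := by
  obtain ⟨U, hU, hM⟩ := exists_polar_decomposition M
  conv_lhs => rw [← hM]
  exact (psd_tmul M).posSemidef_sqrt.trace_orthogonal_mul_le hU

theorem nuclearNorm_mul_sq_le {A B : Matrix (Fin N) (Fin N) ℝ} (hA : A.PosSemidef)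
    (hB : B.PosSemidef) :
    nuclearNorm (B * A) ^ 2 ≤ trace (A * B) * √(trace (A * A) * trace (B * B)) := by
  obtain ⟨U, hU, hM⟩ := exists_polar_decomposition (B * A)
  have h : nuclearNorm (B * A) = trace (Uᵀ * B * A) :=
    calc nuclearNorm (B * A) = trace (Uᵀ * (U * (psd_tmul (B * A)).sqrt)) := by
          rw [← Matrix.mul_assoc, hU, Matrix.one_mul]
          rfl
      _ = trace (Uᵀ * B * A) := by rw [hM, Matrix.mul_assoc]
  rw [h]
  exact hA.sq_trace_orthogonal_mul_mul_le hB hU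

theorem fidelity_eq_nuclearNorm {Kx Ky : Matrix (Fin N) (Fin N) ℝ} (hx : Kx.PosSemidef)
    (hy : Ky.PosSemidef) : fidelity hx hy = nuclearNorm (hy.sqrt * hx.sqrt) := by
  unfold fidelity nuclearNorm
  congr 2
  conv_lhs => rw [← hy.sqrt_mul_self]
  rw [transpose_mul, hy.posSemidef_sqrt.transpose_eq, hx.posSemidef_sqrt.transpose_eq]
  simp only [Matrix.mul_assoc]

end NuclearNorm

theorem one_sub_div_le_sqrt_one_sub_div_sq {c F s : ℝ} (hs : 0 < s) (hcs : c ≤ s)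
    (hF : F ^ 2 ≤ c * s) : 1 - c / s ≤ √(1 - (F / s) ^ 2) := by
  have hFc : (F / s) ^ 2 ≤ c / s := by
    rw [div_pow, div_le_div_iff₀ (by positivity) hs]
    nlinarith
  have hc : c / s ≤ 1 := (div_le_one hs).mpr hcs
  calc 1 - c / s ≤ 1 - (F / s) ^ 2 := by linarith
    _ ≤ √(1 - (F / s) ^ 2) := Real.le_sqrt_of_sq_le (by nlinarith [sq_nonneg (F / s)])

theorem nbs_cka_sqrt_bounds (M : ℕ) (Kx Ky : Matrix (Fin M) (Fin M) ℝ)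
    (hx : Kx.PosSemidef) (hy : Ky.PosSemidef) (hx0 : Kx ≠ 0) (hy0 : Ky ≠ 0) :
    1 - fidelity hx hy / Real.sqrt (Matrix.trace Kx * Matrix.trace Ky) ≤
      1 - Matrix.trace (hx.sqrt * hy.sqrt) / Real.sqrt (Matrix.trace Kx * Matrix.trace Ky) ∧
    1 - Matrix.trace (hx.sqrt * hy.sqrt) / Real.sqrt (Matrix.trace Kx * Matrix.trace Ky) ≤
      Real.sqrt (1 - (fidelity hx hy / Real.sqrt (Matrix.trace Kx * Matrix.trace Ky)) ^ 2) := by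
  set A := hx.sqrt
  set B := hy.sqrt
  have hA : A.PosSemidef := hx.posSemidef_sqrt
  have hB : B.PosSemidef := hy.posSemidef_sqrt
  have hAA : trace (A * A) = trace Kx := by rw [hx.sqrt_mul_self]
  have hBB : trace (B * B) = trace Ky := by rw [hy.sqrt_mul_self]
  have hs : 0 < √(trace Kx * trace Ky) :=
    Real.sqrt_pos.mpr (mul_pos (hx.trace_pos_of_ne_zero hx0) (hy.trace_pos_of_ne_zero hy0))
  have h_lower : trace (A * B) ≤ fidelity hx hy := by
    rw [fidelity_eq_nuclearNorm, trace_mul_comm]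
    exact trace_le_nuclearNorm _
  have h_upper : fidelity hx hy ^ 2 ≤ trace (A * B) * √(trace Kx * trace Ky) := by
    rw [fidelity_eq_nuclearNorm, ← hAA, ← hBB]
    exact nuclearNorm_mul_sq_le hA hB
  have h_cs : trace (A * B) ≤ √(trace Kx * trace Ky) := by
    rw [← hAA, ← hBB]
    simpa only [hA.transpose_eq, hB.transpose_eq] using trace_transpose_mul_le_sqrt A B
  exact ⟨by gcongr, one_sub_div_le_sqrt_one_sub_div_sq hs h_cs h_upper⟩
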